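/- Under the hypotheses of the extension construction (eligible system (A;α,β,γ,δ;u,v), u',v' ∉ A distinct, A' = A∪{u',v'}, α' = peq(α)∨at(u,u'), β' = peq(β)∨at(u,v'), γ' = peq(γ)∨at(v,v'), δ' = peq(δ)∨at(u',v')), the join β' ∨ γ' (computed in Equ(A')) has {u'} as a singleton block and contains A × A; equivalently, β' ∨ γ' is the equivalence on A' whose blocks are A ∪ {v'} and {u'}. -/
import Mathlib


/-- `atEq p q` is the smallest equivalence relation collapsing `p` and `q`
(an atom of the equivalence lattice when `p ≠ q`). -/
def atEq {A : Type*} (p q : A) : Setoid A :=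
  Relation.EqvGen.setoid (fun x y => x = p ∧ y = q)

/-- A subset of a lattice that is closed under binary joins and meets,
i.e. a sublattice (possibly empty). -/
def IsSublatticeClosed {L : Type*} [Lattice L] (S : Set L) : Prop :=
  (∀ a ∈ S, ∀ b ∈ S, a ⊔ b ∈ S) ∧ (∀ a ∈ S, ∀ b ∈ S, a ⊓ b ∈ S)

/-- `X` generates the lattice `L`: no proper sublattice of `L` contains `X`. -/
def GeneratesLattice {L : Type*} [Lattice L] (X : Set L) : Prop :=
  ∀ S : Set L, X ⊆ S → IsSublatticeClosed S → S = Set.univ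

/-- The sublattice generated by `X`: the smallest subset containing `X`
closed under binary joins and meets. -/
def latticeGen {L : Type*} [Lattice L] (X : Set L) : Set L :=
  {a | ∀ S : Set L, X ⊆ S → IsSublatticeClosed S → a ∈ S}

/-- `peq inj μ` is the smallest equivalence on `A'` containing the image of `μ`
under the embedding `inj : A → A'`. -/
def peq {A A' : Type*} (inj : A → A') (μ : Setoid A) : Setoid A' :=
  Relation.EqvGen.setoid (fun x y => ∃ a b, μ a b ∧ x = inj a ∧ y = inj b)

/-- `(A; α, β, γ, δ; u, v)` is an eligible system: `A` is nonempty, `{α,β,γ,δ}`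
generates `Equ A`, and the pairs `(α,δ)`, `(β, γ ⊔ at(u,v))`, `(β ⊔ at(u,v), γ)`
are complementary. -/
def Eligible {A : Type*} (α β γ δ : Setoid A) (u v : A) : Prop :=
  Nonempty A ∧ GeneratesLattice {α, β, γ, δ} ∧
  (α ⊔ δ = ⊤ ∧ α ⊓ δ = ⊥) ∧
  (β ⊔ (γ ⊔ atEq u v) = ⊤ ∧ β ⊓ (γ ⊔ atEq u v) = ⊥) ∧
  ((β ⊔ atEq u v) ⊔ γ = ⊤ ∧ (β ⊔ atEq u v) ⊓ γ = ⊥)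

lemma peq_le {A A' : Type*} {inj : A → A'} {μ : Setoid A} {T : Setoid A'}
    (h : ∀ a b, μ a b → T (inj a) (inj b)) : peq inj μ ≤ T := by
  apply Setoid.eqvGen_le
  rintro x y ⟨a, b, hab, rfl, rfl⟩
  exact h a b hab

lemma atEq_le {A : Type*} {p q : A} {T : Setoid A} (h : T p q) : atEq p q ≤ T := by
  apply Setoid.eqvGen_le
  rintro x y ⟨rfl, rfl⟩
  exact h

lemma peq_rel {A A' : Type*} (inj : A → A') (μ : Setoid A) {a b : A} (h : μ a b) :
    peq inj μ (inj a) (inj b) :=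
  Relation.EqvGen.rel _ _ ⟨a, b, h, rfl, rfl⟩

lemma atEq_rel {A : Type*} (p q : A) : atEq p q p q :=
  Relation.EqvGen.rel _ _ ⟨rfl, rfl⟩

/-- In the extension construction, `β' ⊔ γ'` is the equivalence on
`A' = A ∪ {u', v'}` whose blocks are `A ∪ {v'}` and `{u'}`; in particular `{u'}`
is a singleton block of `β' ⊔ γ'` and `β' ⊔ γ'` contains `A × A`. -/
theorem extension_sup_beta_gamma {A A' : Type*} (α β γ δ : Setoid A) (u v : A)
    (helig : Eligible α β γ δ u v)
    (inj : A → A') (hinj : Function.Injective inj)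
    (u' v' : A') (huv : u' ≠ v')
    (hu : u' ∉ Set.range inj) (hv : v' ∉ Set.range inj)
    (hcover : ∀ x : A', x = u' ∨ x = v' ∨ x ∈ Set.range inj)
    (β' γ' : Setoid A')
    (hβ' : β' = peq inj β ⊔ atEq (inj u) v')
    (hγ' : γ' = peq inj γ ⊔ atEq (inj v) v') :
    β' ⊔ γ' = Setoid.ker (fun x : A' => x = u') := by
  obtain ⟨-, -, -, ⟨htop, -⟩, -⟩ := helig
  set K : Setoid A' := β' ⊔ γ' with hK
  -- basic relations in K
  have hβ'K : β' ≤ K := le_sup_left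
  have hγ'K : γ' ≤ K := le_sup_right
  have hβK : ∀ {a b : A}, β a b → K (inj a) (inj b) := fun h =>
    hβ'K (hβ' ▸ Setoid.le_def.mp le_sup_left (peq_rel inj β h))
  have hγK : ∀ {a b : A}, γ a b → K (inj a) (inj b) := fun h =>
    hγ'K (hγ' ▸ Setoid.le_def.mp le_sup_left (peq_rel inj γ h))
  have huvK' : K (inj u) v' :=
    hβ'K (hβ' ▸ Setoid.le_def.mp le_sup_right (atEq_rel (inj u) v'))
  have hvvK' : K (inj v) v' :=
    hγ'K (hγ' ▸ Setoid.le_def.mp le_sup_right (atEq_rel (inj v) v'))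
  -- K relates any two images
  have hall : ∀ a b : A, K (inj a) (inj b) := by
    have h1 : β ⊔ (γ ⊔ atEq u v) ≤ Setoid.comap inj K := by
      refine sup_le ?_ (sup_le ?_ ?_)
      · intro a b h; exact hβK h
      · intro a b h; exact hγK h
      · apply atEq_le
        exact K.trans huvK' (K.symm hvvK')
    intro a b
    exact (htop ▸ h1) (Setoid.top_def (α := A) ▸ trivial : (⊤ : Setoid A) a b)
  -- every element other than u' is K-related to v'
  have hrelv' : ∀ x : A', x ≠ u' → K x v' := by
    intro x hx
    rcases hcover x with h | h | ⟨a, rfl⟩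
    · exact absurd h hx
    · exact h ▸ K.refl v'
    · exact K.trans (hall a u) huvK'
  -- u' is K-related only to itself
  have hKle : K ≤ Setoid.ker (fun x : A' => x = u') := by
    refine sup_le ?_ ?_ <;> [rw [hβ']; rw [hγ']] <;> refine sup_le ?_ ?_
    · refine peq_le fun a b _ => ?_
      rw [Setoid.ker_def]
      simp only [eq_iff_iff]
      constructor <;> intro h <;> exact absurd ⟨_, h⟩ hu
    · apply atEq_le
      rw [Setoid.ker_def]
      simp only [eq_iff_iff]
      constructor <;> intro h
      · exact absurd ⟨u, h⟩ hu
      · exact absurd h.symm huv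
    · refine peq_le fun a b _ => ?_
      rw [Setoid.ker_def]
      simp only [eq_iff_iff]
      constructor <;> intro h <;> exact absurd ⟨_, h⟩ hu
    · apply atEq_le
      rw [Setoid.ker_def]
      simp only [eq_iff_iff]
      constructor <;> intro h
      · exact absurd ⟨v, h⟩ hu
      · exact absurd h.symm huv
  refine le_antisymm hKle ?_
  intro x y hxy
  rw [Setoid.ker_def] at hxy
  by_cases hx : x = u'
  · have hy : y = u' := cast hxy hx
    exact hx ▸ hy ▸ K.refl u'
  · have hy : y ≠ u' := fun h => hx (cast hxy.symm h)
    exact K.trans (hrelv' x hx) (K.symm (hrelv' y hy))
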